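/- The derivation D := D_{+,1} − D_{−,1} − D_{+,0} + D_{−,0} on 𝒜 reproduces the complexified Ablowitz–Ladik equation: D(r_n) = r_{n+1} − 2r_n + r_{n−1} − r_n q_n (r_{n+1} + r_{n−1}) and D(q_n) = −q_{n+1} + 2q_n − q_{n−1} + r_n q_n (q_{n+1} + q_{n−1}). -/

import Mathlib

/-!
Comparing the coefficients of `λ⁰` and `λ¹` in the resolvent equation, together with
`tr R = 1` and `det R = 0`, determines the first two coefficient matrices of `R_-` and `R_+`;
the entries `b_{-,1}` and `c_{+,1}` are only seen through `Λ`, which is injective. This gives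
`a_{α,p}, b_{α,p}, c_{α,p}` for `p ≤ 1`, hence the action of each `D_{α,p}`, `p ≤ 1`, on `r_n`
and `q_n`.
-/

noncomputable section

open PowerSeries

open scoped Classical

/-- The polynomial ring `𝒜 = ℚ[q_{n+i}, r_{n+i} : i ∈ ℤ]`; the variable `(true, i)`
is `q_{n+i}` and `(false, i)` is `r_{n+i}`. -/
abbrev A : Type := MvPolynomial (Bool × ℤ) ℚ

/-- The generator `q_{n+i}`. -/
def qv (i : ℤ) : A := MvPolynomial.X (true, i)

/-- The generator `r_{n+i}`. -/
def rv (i : ℤ) : A := MvPolynomial.X (false, i)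

/-- The shift operator `Λ`, determined by `Λ(q_{n+i}) = q_{n+i+1}`, `Λ(r_{n+i}) = r_{n+i+1}`. -/
def Lam : A →+* A :=
  (MvPolynomial.rename (fun bi : Bool × ℤ => (bi.1, bi.2 + 1))).toRingHom

/-- Formal power series over `𝒜` (in `λ`, or in `λ⁻¹`, depending on the context). -/
abbrev S : Type := PowerSeries A

/-- 2×2 matrices over `𝒜[[λ]]` (resp. `𝒜[[λ⁻¹]]`). -/
abbrev M2 : Type := Matrix (Fin 2) (Fin 2) S

/-- `Λ` acting coefficientwise on formal power series. -/
def LamS : S →+* S := PowerSeries.map Lam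

/-- The Lax matrix `U(λ) = ((λ, r_n), (λ q_n, 1))`, as a matrix over `𝒜[[λ]]`. -/
def Umat : M2 :=
  !![PowerSeries.X, PowerSeries.C (rv 0);
     PowerSeries.X * PowerSeries.C (qv 0), 1]

/-- The Lax matrix multiplied by `λ⁻¹`, i.e. `λ⁻¹·U(λ) = ((1, λ⁻¹ r_n), (q_n, λ⁻¹))`,
as a matrix over `𝒜[[λ⁻¹]]` (here `PowerSeries.X` stands for `λ⁻¹`). -/
def UmatInf : M2 :=
  !![1, PowerSeries.X * PowerSeries.C (rv 0);
     PowerSeries.C (qv 0), PowerSeries.X]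

/-- `R` is the basic matrix resolvent at `λ = 0`: it is a matrix resolvent
(`Λ(R(λ))·U(λ) = U(λ)·R(λ)`), `R ≡ ((0, r_{n-1}), (0, 1)) mod λ`, `tr R = 1`, `det R = 0`. -/
def IsResMinus (R : M2) : Prop :=
  R.map (⇑LamS) * Umat = Umat * R ∧
  R.map (⇑(PowerSeries.constantCoeff (R := A))) = !![0, rv (-1); 0, 1] ∧
  R 0 0 + R 1 1 = 1 ∧
  R 0 0 * R 1 1 - R 0 1 * R 1 0 = 0

/-- `R` is the basic matrix resolvent at `λ = ∞`: it is a matrix resolvent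
(the equation `Λ(R(λ))·U(λ) = U(λ)·R(λ)` is multiplied by `λ⁻¹`, so that it takes place
in matrices over `𝒜[[λ⁻¹]]`), `R ≡ ((1, 0), (q_{n-1}, 0)) mod λ⁻¹`, `tr R = 1`, `det R = 0`. -/
def IsResPlus (R : M2) : Prop :=
  R.map (⇑LamS) * UmatInf = UmatInf * R ∧
  R.map (⇑(PowerSeries.constantCoeff (R := A))) = !![1, 0; qv (-1), 0] ∧
  R 0 0 + R 1 1 = 1 ∧
  R 0 0 * R 1 1 - R 0 1 * R 1 0 = 0

/-- The `p`-th coefficient matrix of a matrix of power series. -/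
def coefM (R : M2) (p : ℕ) : Matrix (Fin 2) (Fin 2) A :=
  Matrix.of fun i j => PowerSeries.coeff p (R i j)

/-- The coefficients `a_{α,p}` (with `α = + ↔ true`, `α = - ↔ false`). -/
def aC (Rm Rp : M2) (α : Bool) (p : ℕ) : A :=
  if α then coefM Rp p 0 0 - (if p = 0 then 1 else 0) else coefM Rm p 0 0

/-- The coefficients `b_{α,p}`. -/
def bC (Rm Rp : M2) (α : Bool) (p : ℕ) : A :=
  if α then coefM Rp p 0 1 else coefM Rm p 0 1

/-- The coefficients `c_{α,p}`. -/
def cC (Rm Rp : M2) (α : Bool) (p : ℕ) : A :=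
  if α then coefM Rp p 1 0 else coefM Rm p 1 0

/-- `U(λ) = U0 + λ·U1`: constant part. -/
def U0 : Matrix (Fin 2) (Fin 2) A := !![0, rv 0; 0, 1]

/-- `U(λ) = U0 + λ·U1`: linear part. -/
def U1 : Matrix (Fin 2) (Fin 2) A := !![1, 0; qv 0, 0]

/-- The coefficient at `λ^m` (`m ∈ ℤ`) of the Laurent-polynomial matrix `V_{α,p}(λ)`,
where `V_{-,p}(λ) = (λ^{-p}R_-(λ))_{≤0} - ((a_{-,p}, b_{-,p}), (0,0))` and
`V_{+,p}(λ) = (λ^{p}R_+(λ))_{≥0} - ((0,0), (c_{+,p}, -a_{+,p}))`. -/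
def Vc (Rm Rp : M2) (α : Bool) (p : ℕ) (m : ℤ) : Matrix (Fin 2) (Fin 2) A :=
  if α then
    (if 0 ≤ m ∧ m ≤ (p : ℤ) then coefM Rp ((p : ℤ) - m).toNat else 0)
      - (if m = 0 then !![0, 0; cC Rm Rp true p, - aC Rm Rp true p] else 0)
  else
    (if -(p : ℤ) ≤ m ∧ m ≤ 0 then coefM Rm (m + (p : ℤ)).toNat else 0)
      - (if m = 0 then !![aC Rm Rp false p, bC Rm Rp false p; 0, 0] else 0)

/-- The coefficient at `λ^m` (`m ∈ ℤ`) of `D(U(λ))`, where `D(λ) = 0`, i.e. of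
`((0, D r_n), (λ·D q_n, 0))`. -/
def DUcoef (D : Derivation ℚ A A) (m : ℤ) : Matrix (Fin 2) (Fin 2) A :=
  if m = 0 then !![0, D (rv 0); 0, 0]
  else if m = 1 then !![0, 0; D (qv 0), 0] else 0

/-- The equation `D(U(λ)) = Λ(V_{α,p}(λ))·U(λ) - U(λ)·V_{α,p}(λ)`, written coefficientwise
in powers of `λ` (both sides are Laurent polynomials in `λ` with matrix coefficients). -/
def DUeq (Rm Rp : M2) (α : Bool) (p : ℕ) (D : Derivation ℚ A A) : Prop :=
  ∀ m : ℤ,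
    DUcoef D m =
      (Vc Rm Rp α p m).map Lam * U0 + (Vc Rm Rp α p (m - 1)).map Lam * U1
        - U0 * Vc Rm Rp α p m - U1 * Vc Rm Rp α p (m - 1)

/-- `D` commutes with the shift `Λ`. -/
def CommutesLam (D : Derivation ℚ A A) : Prop := ∀ f : A, D (Lam f) = Lam (D f)

/-- The action of `D_{α,p}` on the generators `r_n`, `q_n`. -/
def GenEqs (Rm Rp : M2) (α : Bool) (p : ℕ) (D : Derivation ℚ A A) : Prop :=
  if α then
    D (rv 0) = rv 0 * Lam (aC Rm Rp true p) + Lam (bC Rm Rp true p)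
        + (if p = 0 then rv 0 else 0) ∧
    D (qv 0) = qv 0 * Lam (aC Rm Rp true p) - Lam (cC Rm Rp true p)
  else
    D (rv 0) = -(rv 0 * Lam (aC Rm Rp false p)) - Lam (bC Rm Rp false p) ∧
    D (qv 0) = -(qv 0 * Lam (aC Rm Rp false p)) + Lam (cC Rm Rp false p)
        + (if p = 0 then qv 0 else 0)

/-- `D` is the Ablowitz–Ladik derivation `D_{α,p}`: the unique derivation of `𝒜`
commuting with `Λ` and acting on the generators by the prescribed formulas. -/
def IsALDeriv (Rm Rp : M2) (α : Bool) (p : ℕ) (D : Derivation ℚ A A) : Prop :=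
  CommutesLam D ∧ GenEqs Rm Rp α p D

/-- The coefficient at `λ^m` (`m ∈ ℤ`) of `R_α(λ)`: `R_-(λ)` has only nonnegative powers,
`R_+(λ)` only nonpositive ones. -/
def RExt (Rm Rp : M2) (α : Bool) (m : ℤ) : Matrix (Fin 2) (Fin 2) A :=
  if α then (if m ≤ 0 then coefM Rp (-m).toNat else 0)
  else (if 0 ≤ m then coefM Rm m.toNat else 0)

/-- Extension of a double sequence by zero to integer indices. -/
def OmExt (Om : ℕ → ℕ → A) (m k : ℤ) : A :=
  if 0 ≤ m ∧ 0 ≤ k then Om m.toNat k.toNat else 0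

/-- The generating identity `tr(R_+(λ)R_+(μ)) - 1 = (λ-μ)² Σ_{p,q≥0} Ω_{p,q} λ^{-p-1} μ^{-q-1}`,
written coefficientwise: `m, k` are the exponents of `λ⁻¹, μ⁻¹`. -/
def GenPP (Rp : M2) (Om : ℕ → ℕ → A) : Prop :=
  ∀ m k : ℤ,
    (if 0 ≤ m ∧ 0 ≤ k then (coefM Rp m.toNat * coefM Rp k.toNat).trace else 0)
      - (if m = 0 ∧ k = 0 then 1 else 0)
    = OmExt Om (m + 1) (k - 1) - 2 * OmExt Om m k + OmExt Om (m - 1) (k + 1)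

/-- The generating identity `tr(R_-(λ)R_-(μ)) - 1 = (λ-μ)² Σ_{p,q≥0} Ω_{p,q} λ^{p-1} μ^{q-1}`,
written coefficientwise: `m, k` are the exponents of `λ, μ`. -/
def GenMM (Rm : M2) (Om : ℕ → ℕ → A) : Prop :=
  ∀ m k : ℤ,
    (if 0 ≤ m ∧ 0 ≤ k then (coefM Rm m.toNat * coefM Rm k.toNat).trace else 0)
      - (if m = 0 ∧ k = 0 then 1 else 0)
    = OmExt Om (m - 1) (k + 1) - 2 * OmExt Om m k + OmExt Om (m + 1) (k - 1)

/-- The generating identity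
`Σ_{p,q≥0} Ω_{p,q} λ^{-p-1} μ^{q-1} = -tr(R_+(λ)R_-(μ))·Σ_{m≥1} m μ^{m-1} λ^{-m-1} + λ^{-2}`
(the expansion of `-tr(R_+(λ)R_-(μ))/(λ-μ)² + 1/λ²` for `|λ| > |μ|`), together with the
vanishing `Ω_{0,q} = Ω_{p,0} = 0`; `a` is the exponent of `λ⁻¹` and `b` the one of `μ`. -/
def GenPM (Rm Rp : M2) (Om : ℕ → ℕ → A) : Prop :=
  (∀ q, Om 0 q = 0) ∧ (∀ p, Om p 0 = 0) ∧
  ∀ a b : ℤ,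
    OmExt Om (a - 1) (b + 1)
      = -(∑ m ∈ Finset.Icc (1 : ℤ) (min (a - 1) (b + 1)),
            m • (coefM Rp (a - m - 1).toNat * coefM Rm (b - m + 1).toNat).trace)
        + (if a = 2 ∧ b = 0 then 1 else 0)

/-- The generating identity
`Σ_{p,q≥0} Ω_{q,p} λ^{p-1} μ^{-q-1} = -tr(R_-(λ)R_+(μ))·Σ_{m≥1} m λ^{m-1} μ^{-m-1} + μ^{-2}`
(the expansion of `-tr(R_-(λ)R_+(μ))/(λ-μ)² + 1/μ²` for `|μ| > |λ|`);
`c` is the exponent of `λ` and `d` the one of `μ⁻¹`. -/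
def GenMP (Rm Rp : M2) (Om : ℕ → ℕ → A) : Prop :=
  ∀ c d : ℤ,
    OmExt Om (d - 1) (c + 1)
      = -(∑ m ∈ Finset.Icc (1 : ℤ) (min (c + 1) (d - 1)),
            m • (coefM Rm (c - m + 1).toNat * coefM Rp (d - m - 1).toNat).trace)
        + (if c = 0 ∧ d = 2 then 1 else 0)

/-- `Om α β p q` is the full tau-structure family `Ω_{α,p;β,q}`
(with `α = + ↔ true`), as defined by the four generating identities,
where `Ω_{-,p;+,q} := Ω_{+,q;-,p}`. -/
def OmFam (Rm Rp : M2) (Om : Bool → Bool → ℕ → ℕ → A) : Prop :=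
  GenPP Rp (Om true true) ∧ GenMM Rm (Om false false) ∧ GenPM Rm Rp (Om true false) ∧
  ∀ p q, Om false true p q = Om true false q p

/-- The multipoint quantities `Ω_{α_1,p_1;…;α_m,p_m}` (`m = k + 2` points), defined
inductively from the two-point family by applying the derivations `D_{α,p}`. -/
def OmK (Om : Bool → Bool → ℕ → ℕ → A) (D : Bool → ℕ → Derivation ℚ A A) :
    (k : ℕ) → (Fin (k + 2) → Bool) → (Fin (k + 2) → ℕ) → A
  | 0, β, i => Om (β 0) (β 1) (i 0) (i 1)
  | k + 1, β, i =>
      D (β (Fin.last (k + 2))) (i (Fin.last (k + 2)))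
        (OmK Om D k (fun j => β j.castSucc) (fun j => i j.castSucc))

/-- Multiplication of a formal series in `λ_1, …, λ_n` with exponents in `ℤⁿ`
(given by its coefficient function `F`) by a polynomial `P`, coefficientwise. -/
def mulPoly {n : ℕ} (P : MvPolynomial (Fin n) A) (F : (Fin n → ℤ) → A)
    (m : Fin n → ℤ) : A :=
  ∑ d ∈ P.support, P.coeff d * F (fun j => m j - d j)

/-- The Vandermonde-type polynomial `∏_{i<j} (λ_i - λ_j)`. -/
def vandP (n : ℕ) : MvPolynomial (Fin n) A :=
  ∏ p ∈ Finset.univ.filter (fun p : Fin n × Fin n => p.1 < p.2),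
    (MvPolynomial.X p.1 - MvPolynomial.X p.2)

/-- `i` and `j` are cyclically adjacent for `σ`, i.e. `{i,j} = {σ(t), σ(t+1)}` for some `t`. -/
def cycAdj {n : ℕ} [NeZero n] (σ : Equiv.Perm (Fin n)) (i j : Fin n) : Prop :=
  ∃ t : Fin n, (σ t = i ∧ σ (t + 1) = j) ∨ (σ t = j ∧ σ (t + 1) = i)

/-- The polynomial `∏_{i<j} (λ_i - λ_j) / ∏_t (λ_{σ(t)} - λ_{σ(t+1)})`, up to the sign
`permSign σ`: the product of `(λ_i - λ_j)` over ordered non-cyclically-adjacent pairs. -/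
def Qpoly {n : ℕ} [NeZero n] (σ : Equiv.Perm (Fin n)) : MvPolynomial (Fin n) A :=
  ∏ p ∈ Finset.univ.filter
      (fun p : Fin n × Fin n => p.1 < p.2 ∧ ¬ cycAdj σ p.1 p.2),
    (MvPolynomial.X p.1 - MvPolynomial.X p.2)

/-- The sign relating `∏_t (λ_{σ(t)} - λ_{σ(t+1)})` with the corresponding product over
ordered pairs. -/
def permSign {n : ℕ} [NeZero n] (σ : Equiv.Perm (Fin n)) : A :=
  ∏ t : Fin n, (if σ (t + 1) < σ t then (-1 : A) else 1)

/-- The coefficient function of `tr(R_{α_{σ(1)}}(λ_{σ(1)}) ⋯ R_{α_{σ(n)}}(λ_{σ(n)}))`. -/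
def Gfun (Rm Rp : M2) {n : ℕ} (β : Fin n → Bool) (σ : Equiv.Perm (Fin n))
    (m : Fin n → ℤ) : A :=
  (List.ofFn (fun j : Fin n => RExt Rm Rp (β (σ j)) (m (σ j)))).prod.trace

/-- The coefficient function of the generating series
`Σ_{i_1,…,i_m ≥ 0} Ω_{α_1,i_1;…;α_m,i_m} / (λ_1^{α_1 i_1 + 1} ⋯ λ_m^{α_m i_m + 1})`. -/
def lhsF (Om : Bool → Bool → ℕ → ℕ → A) (D : Bool → ℕ → Derivation ℚ A A)
    {k : ℕ} (β : Fin (k + 2) → Bool) (m : Fin (k + 2) → ℤ) : A :=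
  if (∀ j, if β j then m j ≤ -1 else -1 ≤ m j) then
    OmK Om D k β (fun j => if β j then (-(m j) - 1).toNat else (m j + 1).toNat)
  else 0

open Finset in
lemma coefM_mul (M N : M2) (n : ℕ) :
    coefM (M * N) n = ∑ ij ∈ antidiagonal n, coefM M ij.1 * coefM N ij.2 := by
  ext i j
  simp only [coefM, Matrix.of_apply, Matrix.mul_apply, map_sum, PowerSeries.coeff_mul,
    Matrix.sum_apply]
  rw [Finset.sum_comm]

lemma coefM_mul_one (M N : M2) :
    coefM (M * N) 1 = coefM M 0 * coefM N 1 + coefM M 1 * coefM N 0 := by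
  rw [coefM_mul, Finset.Nat.antidiagonal_succ]
  simp

lemma coefM_map_LamS (R : M2) (n : ℕ) : coefM (R.map LamS) n = (coefM R n).map Lam := by
  ext i j
  simp [coefM, LamS, PowerSeries.coeff_map]

lemma coefM_zero_eq_map_constantCoeff (R : M2) :
    coefM R 0 = R.map (PowerSeries.constantCoeff (R := A)) := by
  ext i j
  simp [coefM]

lemma coefM_Umat_zero : coefM Umat 0 = U0 := by
  ext i j; fin_cases i <;> fin_cases j <;> simp [coefM, Umat, U0]

lemma coefM_Umat_one : coefM Umat 1 = U1 := by
  ext i j; fin_cases i <;> fin_cases j <;> simp [coefM, Umat, U1, PowerSeries.coeff_one]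

lemma coefM_UmatInf_zero : coefM UmatInf 0 = U1 := by
  ext i j; fin_cases i <;> fin_cases j <;> simp [coefM, UmatInf, U1]

lemma coefM_UmatInf_one : coefM UmatInf 1 = U0 := by
  ext i j; fin_cases i <;> fin_cases j <;> simp [coefM, UmatInf, U0, PowerSeries.coeff_one]

lemma Lam_qv (i : ℤ) : Lam (qv i) = qv (i + 1) := by
  simp [Lam, qv]

lemma Lam_rv (i : ℤ) : Lam (rv i) = rv (i + 1) := by
  simp [Lam, rv]

lemma Lam_injective : Function.Injective Lam :=
  MvPolynomial.rename_injective _ fun _ _ h => by simpa [Prod.ext_iff] using h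

namespace IsResMinus

variable {R : M2} (h : IsResMinus R)
include h

lemma coefM_zero : coefM R 0 = !![0, rv (-1); 0, 1] := by
  rw [coefM_zero_eq_map_constantCoeff, h.2.1]

lemma coefM_resolvent_one :
    (coefM R 0).map Lam * U1 + (coefM R 1).map Lam * U0 = U0 * coefM R 1 + U1 * coefM R 0 := by
  simpa [coefM_mul_one, coefM_map_LamS, coefM_Umat_zero, coefM_Umat_one, add_comm]
    using congrArg (coefM · 1) h.1

lemma coefM_one :
    coefM R 1 = !![rv (-1) * qv 0, rv (-2) - rv (-1) * rv (-2) * qv (-1) - rv (-1) ^ 2 * qv 0;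
      qv 0, -(rv (-1) * qv 0)] := by
  have hR0 (i j : Fin 2) : constantCoeff (R i j) = !![0, rv (-1); 0, 1] i j :=
    congrFun (congrFun h.2.1 i) j
  have hU (i j : Fin 2) := congrFun (congrFun h.coefM_resolvent_one i) j
  simp only [Matrix.add_apply, Matrix.mul_apply, Fin.sum_univ_two, Matrix.map_apply,
    h.coefM_zero, U0, U1] at hU
  have hc : coefM R 1 1 0 = qv 0 := by simpa using (hU 1 0).symm
  have hdet : coefM R 1 0 0 - coefM R 1 1 0 * rv (-1) = 0 := by
    simpa [coefM, coeff_one_mul, hR0] using congrArg (coeff 1) h.2.2.2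
  have ha : coefM R 1 0 0 = rv (-1) * qv 0 := by linear_combination hdet + rv (-1) * hc
  have htr : coefM R 1 0 0 + coefM R 1 1 1 = 0 := by
    simpa [coefM, coeff_one] using congrArg (coeff 1) h.2.2.1
  have hd : coefM R 1 1 1 = -(rv (-1) * qv 0) := by linear_combination htr - ha
  have hb : coefM R 1 0 1 = rv (-2) - rv (-1) * rv (-2) * qv (-1) - rv (-1) ^ 2 * qv 0 := by
    apply Lam_injective
    have hb := hU 0 1
    simp only [ha, hd, Matrix.of_apply, Matrix.cons_val', Matrix.cons_val_zero, Matrix.cons_val_one,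
      Matrix.cons_val_fin_one, map_zero, map_sub, map_mul, map_pow, Lam_rv, Lam_qv,
      Int.reduceAdd, Int.reduceNeg] at hb ⊢
    linear_combination hb
  rw [Matrix.eta_fin_two (coefM R 1), ha, hb, hc, hd]

end IsResMinus

namespace IsResPlus

variable {R : M2} (h : IsResPlus R)
include h

lemma coefM_zero : coefM R 0 = !![1, 0; qv (-1), 0] := by
  rw [coefM_zero_eq_map_constantCoeff, h.2.1]

lemma coefM_resolvent_one :
    (coefM R 0).map Lam * U0 + (coefM R 1).map Lam * U1 = U1 * coefM R 1 + U0 * coefM R 0 := by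
  simpa [coefM_mul_one, coefM_map_LamS, coefM_UmatInf_zero, coefM_UmatInf_one]
    using congrArg (coefM · 1) h.1

lemma coefM_one :
    coefM R 1 = !![-(rv 0 * qv (-1)), rv 0;
      qv (-2) - rv (-1) * qv (-1) * qv (-2) - rv 0 * qv (-1) ^ 2, rv 0 * qv (-1)] := by
  have hR0 (i j : Fin 2) : constantCoeff (R i j) = !![1, 0; qv (-1), 0] i j :=
    congrFun (congrFun h.2.1 i) j
  have hU (i j : Fin 2) := congrFun (congrFun h.coefM_resolvent_one i) j
  simp only [Matrix.add_apply, Matrix.mul_apply, Fin.sum_univ_two, Matrix.map_apply,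
    h.coefM_zero, U0, U1] at hU
  have hb : coefM R 1 0 1 = rv 0 := by simpa [Lam_rv] using (hU 0 1).symm
  have hdet : coefM R 1 1 1 - coefM R 1 0 1 * qv (-1) = 0 := by
    simpa [coefM, coeff_one_mul, hR0] using congrArg (coeff 1) h.2.2.2
  have hd : coefM R 1 1 1 = rv 0 * qv (-1) := by linear_combination hdet + qv (-1) * hb
  have htr : coefM R 1 0 0 + coefM R 1 1 1 = 0 := by
    simpa [coefM, coeff_one] using congrArg (coeff 1) h.2.2.1
  have ha : coefM R 1 0 0 = -(rv 0 * qv (-1)) := by linear_combination htr - hd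
  have hc : coefM R 1 1 0 = qv (-2) - rv (-1) * qv (-1) * qv (-2) - rv 0 * qv (-1) ^ 2 := by
    apply Lam_injective
    have hc := hU 1 0
    simp only [ha, hd, Matrix.of_apply, Matrix.cons_val', Matrix.cons_val_zero, Matrix.cons_val_one,
      Matrix.cons_val_fin_one, map_zero, map_sub, map_mul, map_pow, Lam_rv, Lam_qv,
      Int.reduceAdd, Int.reduceNeg] at hc ⊢
    linear_combination hc
  rw [Matrix.eta_fin_two (coefM R 1), ha, hb, hc, hd]

end IsResPlus

namespace GenEqs

variable {Rm Rp : M2} {D : Derivation ℚ A A}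

lemma generators_true_zero (hp : IsResPlus Rp) (h : GenEqs Rm Rp true 0 D) :
    D (rv 0) = rv 0 ∧ D (qv 0) = -qv 0 := by
  simpa [GenEqs, aC, bC, cC, hp.coefM_zero, Lam_qv] using h

lemma generators_false_zero (hm : IsResMinus Rm) (h : GenEqs Rm Rp false 0 D) :
    D (rv 0) = -rv 0 ∧ D (qv 0) = qv 0 := by
  simpa [GenEqs, aC, bC, cC, hm.coefM_zero, Lam_rv] using h

lemma generators_true_one (hp : IsResPlus Rp) (h : GenEqs Rm Rp true 1 D) :
    D (rv 0) = rv 1 - rv 0 * rv 1 * qv 0 ∧ D (qv 0) = -qv (-1) + rv 0 * qv 0 * qv (-1) := by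
  obtain ⟨hr, hq⟩ := h
  simp only [aC, bC, cC, hp.coefM_one, if_true, one_ne_zero, if_false, sub_zero, add_zero,
    Matrix.of_apply, Matrix.cons_val', Matrix.cons_val_zero, Matrix.cons_val_one,
    Matrix.cons_val_fin_one, map_neg, map_sub, map_mul, map_pow, Lam_rv, Lam_qv,
    Int.reduceAdd, Int.reduceNeg] at hr hq
  exact ⟨by linear_combination hr, by linear_combination hq⟩

lemma generators_false_one (hm : IsResMinus Rm) (h : GenEqs Rm Rp false 1 D) :
    D (rv 0) = -rv (-1) + rv 0 * rv (-1) * qv 0 ∧ D (qv 0) = qv 1 - rv 0 * qv 0 * qv 1 := by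
  obtain ⟨hr, hq⟩ := h
  simp only [aC, bC, cC, hm.coefM_one, Bool.false_eq_true, one_ne_zero, if_false,
    add_zero, Matrix.of_apply, Matrix.cons_val', Matrix.cons_val_zero, Matrix.cons_val_one,
    Matrix.cons_val_fin_one, map_sub, map_mul, map_pow, Lam_rv, Lam_qv,
    Int.reduceAdd, Int.reduceNeg] at hr hq
  exact ⟨by linear_combination hr, by linear_combination hq⟩

end GenEqs

/-- The combination `D = D_{+,1} - D_{-,1} - D_{+,0} + D_{-,0}` yields the complexified
Ablowitz–Ladik equation. -/
theorem complexified_AL_equation (Rm Rp : M2) (hm : IsResMinus Rm) (hp : IsResPlus Rp)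
    (D : Bool → ℕ → Derivation ℚ A A)
    (hD : ∀ α p, IsALDeriv Rm Rp α p (D α p)) :
    (D true 1 - D false 1 - D true 0 + D false 0) (rv 0)
        = rv 1 - 2 * rv 0 + rv (-1) - rv 0 * qv 0 * (rv 1 + rv (-1)) ∧
    (D true 1 - D false 1 - D true 0 + D false 0) (qv 0)
        = - qv 1 + 2 * qv 0 - qv (-1) + rv 0 * qv 0 * (qv 1 + qv (-1)) := by
  obtain ⟨hrP1, hqP1⟩ := (hD true 1).2.generators_true_one hp
  obtain ⟨hrM1, hqM1⟩ := (hD false 1).2.generators_false_one hm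
  obtain ⟨hrP0, hqP0⟩ := (hD true 0).2.generators_true_zero hp
  obtain ⟨hrM0, hqM0⟩ := (hD false 0).2.generators_false_zero hm
  simp only [Derivation.add_apply, Derivation.sub_apply]
  constructor
  · rw [hrP1, hrM1, hrP0, hrM0]; ring
  · rw [hqP1, hqM1, hqP0, hqM0]; ring
end
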